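/- If G is a simple oriented hypergraph, then the walk matrix on vertices satisfies X_{(G,V,V,k)} = A_G^k for every non-negative integer k. -/
import Mathlib


open Matrix

/-- A simple oriented hypergraph: each vertex-edge pair is incident at most once,
`σ v e` is the sign (±1) of the incidence `(v,e)`, and `σ v e = 0` when `v` and
`e` are not incident. -/
structure SOHG (V E : Type) where
  σ : V → E → ℤ
  σ_mem : ∀ v e, σ v e = 1 ∨ σ v e = -1 ∨ σ v e = 0

variable {V E : Type} [Fintype V] [Fintype E] [DecidableEq V] [DecidableEq E]

/-- The adjacency matrix: `a_ij = ∑_e sgn_e(v_i,v_j)` where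
`sgn_e(v,w) = -σ(v,e)σ(w,e)` (which is `0` unless both are incident to `e`);
a simple oriented hypergraph has no self-adjacencies, so the diagonal is `0`. -/
def SOHG.adj (G : SOHG V E) : Matrix V V ℤ :=
  Matrix.of fun i j => if i = j then 0 else ∑ e, -(G.σ i e * G.σ j e)

/-- The degree of a vertex: the number of incidences (= incident edges) containing it. -/
def SOHG.deg (G : SOHG V E) (v : V) : ℕ :=
  (Finset.univ.filter fun e => G.σ v e ≠ 0).card

/-- The degree matrix. -/
def SOHG.degMatrix (G : SOHG V E) : Matrix V V ℤ :=
  Matrix.diagonal fun v => (G.deg v : ℤ)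

/-- The Laplacian matrix `L_G = D_G - A_G`. -/
def SOHG.lap (G : SOHG V E) : Matrix V V ℤ := G.degMatrix - G.adj

/-- The incidence matrix: the `(v,e)`-entry is `σ(v,e)` (which is `0` when `v`
and `e` are not incident). -/
def SOHG.H (G : SOHG V E) : Matrix V E ℤ := Matrix.of fun v e => G.σ v e

/-- `w^±(i,j;k)`: the signed count (positive minus negative) of vertex-walks of
length `k` from `i` to `j`.  A walk is given by a vertex sequence `vs` and an
edge sequence `es` such that consecutive vertices are incident to the common
edge via distinct incidences; its sign is the product of the signs
`-σ(v,e)σ(w,e)` of its adjacencies, which equals `(-1)^⌊n/2⌋ ∏ σ(i_h)` over its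
incidences. -/
def SOHG.wpm (G : SOHG V E) (i j : V) (k : ℕ) : ℤ :=
  ∑ vs : Fin (k + 1) → V, ∑ es : Fin k → E,
    if vs 0 = i ∧ vs (Fin.last k) = j ∧
        ∀ h : Fin k, G.σ (vs h.castSucc) (es h) ≠ 0 ∧
          G.σ (vs h.succ) (es h) ≠ 0 ∧ vs h.castSucc ≠ vs h.succ then
      ∏ h : Fin k, -(G.σ (vs h.castSucc) (es h) * G.σ (vs h.succ) (es h))
    else 0

/-- The `k`-walk matrix `X_{(G,V,V,k)}`, whose `(i,j)`-entry is `w^±(vᵢ,vⱼ;k)`. -/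
def SOHG.walkMatrixVV (G : SOHG V E) (k : ℕ) : Matrix V V ℤ :=
  Matrix.of fun i j => G.wpm i j k

/-- The adjacency entry as a sum over edges of guarded terms. -/
lemma SOHG.adj_eq_sum_ite (G : SOHG V E) (i j : V) :
    G.adj i j = ∑ e, if G.σ i e ≠ 0 ∧ G.σ j e ≠ 0 ∧ i ≠ j then
      -(G.σ i e * G.σ j e) else 0 := by
  unfold SOHG.adj
  simp only [Matrix.of_apply]
  by_cases hij : i = j
  · subst hij; simp
  · rw [if_neg hij]
    refine Finset.sum_congr rfl fun e _ => ?_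
    by_cases h1 : G.σ i e = 0
    · simp [h1]
    · by_cases h2 : G.σ j e = 0
      · simp [h2]
      · rw [if_pos ⟨h1, h2, hij⟩]

/-- Path sums compute matrix powers. -/
lemma pathSum_eq_pow (M : Matrix V V ℤ) (k : ℕ) (j : V) : ∀ i : V,
    (∑ vs : Fin (k + 1) → V, if vs 0 = i ∧ vs (Fin.last k) = j then
      ∏ h : Fin k, M (vs h.castSucc) (vs h.succ) else 0) = (M ^ k) i j := by
  induction k with
  | zero =>
    intro i
    rw [Fintype.sum_equiv (Equiv.funUnique (Fin 1) V) _
      (fun x : V => if x = i ∧ x = j then (1 : ℤ) else 0) (fun vs => by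
        simp [Equiv.funUnique, Fin.last])]
    simp [Matrix.one_apply, ite_and, Finset.sum_ite_eq']
  | succ k ih =>
    intro i
    have key : (∑ vs : Fin (k + 2) → V, if vs 0 = i ∧ vs (Fin.last (k + 1)) = j then
          ∏ h : Fin (k + 1), M (vs h.castSucc) (vs h.succ) else 0)
        = ∑ x : V, ∑ ws : Fin (k + 1) → V,
            if x = i ∧ ws (Fin.last k) = j then
              M x (ws 0) * ∏ h : Fin k, M (ws h.castSucc) (ws h.succ) else 0 := by
      have hsp : (∑ p : V × (Fin (k + 1) → V),
            if p.1 = i ∧ p.2 (Fin.last k) = j then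
              M p.1 (p.2 0) * ∏ h : Fin k, M (p.2 h.castSucc) (p.2 h.succ) else 0)
          = ∑ x : V, ∑ ws : Fin (k + 1) → V,
              if x = i ∧ ws (Fin.last k) = j then
                M x (ws 0) * ∏ h : Fin k, M (ws h.castSucc) (ws h.succ) else 0 :=
        Fintype.sum_prod_type _
      rw [← hsp]
      refine (Fintype.sum_equiv (Fin.consEquiv fun _ : Fin (k + 2) => V) _ _
        fun p => ?_).symm
      obtain ⟨x, ws⟩ := p
      simp only [Fin.consEquiv_apply]
      have h0 : (Fin.cons x ws : Fin (k + 2) → V) 0 = x := rfl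
      have hlast : (Fin.cons x ws : Fin (k + 2) → V) (Fin.last (k + 1)) = ws (Fin.last k) := by
        rw [← Fin.succ_last, Fin.cons_succ]
      have hprod : (∏ h : Fin (k + 1), M ((Fin.cons x ws : Fin (k + 2) → V) h.castSucc)
            ((Fin.cons x ws : Fin (k + 2) → V) h.succ))
          = M x (ws 0) * ∏ h : Fin k, M (ws h.castSucc) (ws h.succ) := by
        rw [Fin.prod_univ_succ]
        have h1 : (∏ h : Fin k,
              M ((Fin.cons x ws : Fin (k + 2) → V) h.succ.castSucc)
                ((Fin.cons x ws : Fin (k + 2) → V) h.succ.succ))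
            = ∏ h : Fin k, M (ws h.castSucc) (ws h.succ) := by
          refine Finset.prod_congr rfl fun h _ => ?_
          rw [← Fin.succ_castSucc, Fin.cons_succ, Fin.cons_succ]
        rw [h1]
        simp
      rw [h0, hlast, hprod]
    rw [key]
    have hx : ∀ x : V, (∑ ws : Fin (k + 1) → V,
        if x = i ∧ ws (Fin.last k) = j then
          M x (ws 0) * ∏ h : Fin k, M (ws h.castSucc) (ws h.succ) else 0)
        = if x = i then (∑ ws : Fin (k + 1) → V, if ws (Fin.last k) = j then
            M i (ws 0) * ∏ h : Fin k, M (ws h.castSucc) (ws h.succ) else 0) else 0 := by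
      intro x
      by_cases hxi : x = i
      · subst hxi
        simp
      · rw [if_neg hxi]
        refine Finset.sum_eq_zero fun ws _ => if_neg ?_
        rintro ⟨rfl, -⟩; exact hxi rfl
    rw [Finset.sum_congr rfl fun x _ => hx x, Finset.sum_ite_eq' Finset.univ i,
      if_pos (Finset.mem_univ i)]
    rw [pow_succ', Matrix.mul_apply]
    have hm : ∀ m : V, M i m * (M ^ k) m j = ∑ ws : Fin (k + 1) → V,
        if ws 0 = m ∧ ws (Fin.last k) = j then
          M i m * ∏ h : Fin k, M (ws h.castSucc) (ws h.succ) else 0 := by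
      intro m
      rw [← ih m, Finset.mul_sum]
      exact Finset.sum_congr rfl fun ws _ => by split_ifs <;> simp
    rw [Finset.sum_congr rfl fun m _ => hm m, Finset.sum_comm]
    refine Finset.sum_congr rfl fun ws _ => ?_
    by_cases hc : ws (Fin.last k) = j
    · simp [hc, Finset.sum_ite_eq]
    · simp [hc]

/-- The signed walk count is a path sum over the adjacency matrix. -/
lemma SOHG.wpm_eq_pathSum (G : SOHG V E) (i j : V) (k : ℕ) :
    G.wpm i j k = ∑ vs : Fin (k + 1) → V,
      if vs 0 = i ∧ vs (Fin.last k) = j then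
        ∏ h : Fin k, G.adj (vs h.castSucc) (vs h.succ) else 0 := by
  unfold SOHG.wpm
  refine Finset.sum_congr rfl fun vs _ => ?_
  by_cases hend : vs 0 = i ∧ vs (Fin.last k) = j
  · rw [if_pos hend]
    have step : ∀ es : Fin k → E,
        (if vs 0 = i ∧ vs (Fin.last k) = j ∧
            ∀ h : Fin k, G.σ (vs h.castSucc) (es h) ≠ 0 ∧
              G.σ (vs h.succ) (es h) ≠ 0 ∧ vs h.castSucc ≠ vs h.succ then
          ∏ h : Fin k, -(G.σ (vs h.castSucc) (es h) * G.σ (vs h.succ) (es h))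
        else 0)
        = ∏ h : Fin k, (if G.σ (vs h.castSucc) (es h) ≠ 0 ∧
            G.σ (vs h.succ) (es h) ≠ 0 ∧ vs h.castSucc ≠ vs h.succ then
            -(G.σ (vs h.castSucc) (es h) * G.σ (vs h.succ) (es h)) else 0) := by
      intro es
      by_cases hall : ∀ h : Fin k, G.σ (vs h.castSucc) (es h) ≠ 0 ∧
          G.σ (vs h.succ) (es h) ≠ 0 ∧ vs h.castSucc ≠ vs h.succ
      · rw [if_pos ⟨hend.1, hend.2, hall⟩]
        exact Finset.prod_congr rfl fun h _ => (if_pos (hall h)).symm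
      · rw [if_neg (by rintro ⟨-, -, h⟩; exact hall h)]
        obtain ⟨h, hh⟩ := not_forall.mp hall
        refine (Finset.prod_eq_zero (Finset.mem_univ h) ?_).symm
        exact if_neg hh
    rw [Finset.sum_congr rfl fun es _ => step es,
      ← Fintype.prod_sum (fun (h : Fin k) (e : E) =>
        if G.σ (vs h.castSucc) e ≠ 0 ∧ G.σ (vs h.succ) e ≠ 0 ∧
            vs h.castSucc ≠ vs h.succ then
          -(G.σ (vs h.castSucc) e * G.σ (vs h.succ) e) else 0)]
    exact Finset.prod_congr rfl fun h _ => (G.adj_eq_sum_ite _ _).symm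
  · rw [if_neg hend]
    refine Finset.sum_eq_zero fun es _ => if_neg ?_
    rintro ⟨h1, h2, -⟩; exact hend ⟨h1, h2⟩

/-- If `G` is a simple oriented hypergraph, then `X_{(G,V,V,k)} = A_G^k` for
every non-negative integer `k`. -/
theorem walkMatrix_eq_adj_pow (G : SOHG V E) (k : ℕ) :
    G.walkMatrixVV k = G.adj ^ k := by
  ext i j
  show G.wpm i j k = (G.adj ^ k) i j
  rw [G.wpm_eq_pathSum, pathSum_eq_pow]
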